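/- arXiv:1902.07733 — 5 statements merged into one kernel-verified Lean document; each statement's English description precedes it below -/
import Mathlib

section
/- Let f : ℝⁿ → ℝⁿ be piecewise affine with pieces (f_i, C_i), i = 1,…,N, and suppose each affine map f_i is invertible (its linear part is a bijection of ℝⁿ). Then f is a proper map: the preimage under f of every compact subset of ℝⁿ is compact. -/
/-- `Eu n` is the Euclidean space `ℝⁿ`. -/
noncomputable abbrev Eu (n : ℕ) := EuclideanSpace ℝ (Fin n)

/-- A closed convex polyhedron in `ℝⁿ`: a finite intersection of closed half-spaces. -/
def IsPolyhedron {n : ℕ} (C : Set (Eu n)) : Prop :=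
  ∃ (m : ℕ) (l : Fin m → (Eu n →ₗ[ℝ] ℝ)) (c : Fin m → ℝ),
    C = {x | ∀ i, l i x ≤ c i}

/-- `f : ℝⁿ → ℝⁿ` is piecewise affine with pieces `(F i, C i)`, `i : Fin N`:
each `F i` is an affine map, each `C i` is a closed convex polyhedron with nonempty
interior, the `C i` cover `ℝⁿ`, their interiors are pairwise disjoint, and `f`
agrees with `F i` on `C i`. -/
def IsPiecewiseAffine {n N : ℕ} (f : Eu n → Eu n)
    (F : Fin N → (Eu n →ᵃ[ℝ] Eu n)) (C : Fin N → Set (Eu n)) : Prop :=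
  (∀ i, IsPolyhedron (C i)) ∧
  (∀ i, (interior (C i)).Nonempty) ∧
  (⋃ i, C i) = Set.univ ∧
  (∀ i j, i ≠ j → interior (C i) ∩ interior (C j) = ∅) ∧
  (∀ i, ∀ x ∈ C i, f x = F i x)

/-!
On each closed piece `C i` the map `f` is the affine homeomorphism `F i`, so
`f ⁻¹' K = ⋃ i, C i ∩ F i ⁻¹' K` is a finite union of closed subsets of the compact sets
`F i ⁻¹' K`.
-/

open Set

theorem IsPolyhedron.isClosed {n : ℕ} {C : Set (Eu n)} (hC : IsPolyhedron C) : IsClosed C := by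
  obtain ⟨m, l, c, rfl⟩ := hC
  simp only [ofPred_forall]
  exact isClosed_iInter fun i => isClosed_le (l i).continuous_of_finiteDimensional continuous_const

theorem AffineMap.isCompact_preimage_of_bijective_linear {𝕜 E F : Type*}
    [NontriviallyNormedField 𝕜] [CompleteSpace 𝕜]
    [NormedAddCommGroup E] [NormedSpace 𝕜 E] [FiniteDimensional 𝕜 E]
    [NormedAddCommGroup F] [NormedSpace 𝕜 F] [FiniteDimensional 𝕜 F]
    (φ : E →ᵃ[𝕜] F) (hφ : Function.Bijective φ.linear) {K : Set F} (hK : IsCompact K) :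
    IsCompact (φ ⁻¹' K) := by
  let e := AffineEquiv.ofBijective (φ.linear_bijective_iff.mp hφ)
  have hpre : φ ⁻¹' K = e.symm '' K := (e.image_symm K).symm
  rw [hpre]
  exact hK.image e.symm.toAffineMap.continuous_of_finiteDimensional

theorem preimage_eq_iUnion_inter_preimage_of_eqOn {X Y ι : Type*} {f : X → Y}
    {g : ι → X → Y} {C : ι → Set X} (hcover : ⋃ i, C i = univ) (hfg : ∀ i, EqOn f (g i) (C i))
    (K : Set Y) : f ⁻¹' K = ⋃ i, C i ∩ g i ⁻¹' K := by
  ext x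
  simp only [mem_preimage, mem_iUnion, mem_inter_iff]
  constructor
  · intro hx
    obtain ⟨i, hxi⟩ := mem_iUnion.mp (hcover ▸ mem_univ x : x ∈ ⋃ i, C i)
    exact ⟨i, hxi, hfg i hxi ▸ hx⟩
  · rintro ⟨i, hxi, hx⟩
    exact (hfg i hxi).symm ▸ hx

theorem isCompact_preimage_of_eqOn_closed_cover {X Y ι : Type*} [TopologicalSpace X] [Finite ι]
    {f : X → Y} {g : ι → X → Y} {C : ι → Set X} (hcover : ⋃ i, C i = univ)
    (hC : ∀ i, IsClosed (C i)) (hfg : ∀ i, EqOn f (g i) (C i)) {K : Set Y}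
    (hK : ∀ i, IsCompact (g i ⁻¹' K)) : IsCompact (f ⁻¹' K) := by
  rw [preimage_eq_iUnion_inter_preimage_of_eqOn hcover hfg]
  exact isCompact_iUnion fun i => (hK i).inter_left (hC i)

/-- If every piece of a piecewise affine map `f : ℝⁿ → ℝⁿ` is an
invertible affine map (its linear part is bijective), then `f` is proper. -/
theorem piecewise_affine_invertible_pieces_proper
    {n N : ℕ} (f : Eu n → Eu n) (F : Fin N → (Eu n →ᵃ[ℝ] Eu n))
    (C : Fin N → Set (Eu n)) (hpa : IsPiecewiseAffine f F C)
    (hinv : ∀ i, Function.Bijective (F i).linear) :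
    ∀ K : Set (Eu n), IsCompact K → IsCompact (f ⁻¹' K) := by
  obtain ⟨hpoly, -, hcover, -, hagree⟩ := hpa
  intro K hK
  exact isCompact_preimage_of_eqOn_closed_cover hcover (fun i => (hpoly i).isClosed) hagree
    fun i => (F i).isCompact_preimage_of_bijective_linear (hinv i) hK
end

section
/- Let f : ℝⁿ → ℝⁿ be piecewise affine with pieces (f_i, C_i), i = 1,…,N, and suppose f is a bijection of ℝⁿ onto ℝⁿ. Then the inverse map f⁻¹ : ℝⁿ → ℝⁿ is also piecewise affine: there exist affine maps g_1,…,g_M : ℝⁿ → ℝⁿ and closed convex polyhedra D_1,…,D_M with nonempty interiors, covering ℝⁿ, with pairwise disjoint interiors, such that f⁻¹ agrees with g_j on D_j for each j. -/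
/-!
On a piece `C i`, which has nonempty interior, injectivity of `f` forces the affine map `F i`
to be injective, hence (in finite dimension) an affine automorphism of `ℝⁿ`. The inverse of `f`
is then piecewise affine with the pieces `((F i)⁻¹, F i '' C i)`, and `F i '' C i`, being the
preimage of `C i` under the affine map `(F i)⁻¹`, is again a polyhedron with nonempty interior.
-/

open Function Filter Topology

theorem AffineMap.injective_of_injOn {E V : Type*} [NormedAddCommGroup E] [NormedSpace ℝ E]
    [AddCommGroup V] [Module ℝ V] {φ : E →ᵃ[ℝ] V} {s : Set E} (hs : (interior s).Nonempty)
    (h : Set.InjOn φ s) : Injective φ := by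
  rw [← φ.linear_injective_iff, injective_iff_map_eq_zero]
  intro v hv
  obtain ⟨x, hx⟩ := hs
  have hline : ∀ᶠ t in 𝓝[≠] (0 : ℝ), t • v + x ∈ s := by
    have : Tendsto (fun t : ℝ => t • v + x) (𝓝 0) (𝓝 x) :=
      ((continuous_id.smul continuous_const).add continuous_const).tendsto' 0 x (by simp)
    exact nhdsWithin_le_nhds (this.eventually (mem_interior_iff_mem_nhds.mp hx))
  obtain ⟨t, hts, ht0⟩ := (hline.and self_mem_nhdsWithin).exists
  have hfix : t • v + x = x := h hts (interior_subset hx) (by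
    rw [← vadd_eq_add, φ.map_vadd, map_smul, hv, smul_zero, zero_vadd])
  exact (smul_eq_zero.mp (add_eq_right.mp hfix)).resolve_left ht0

theorem AffineMap.bijective_of_injective {k V : Type*} [Field k] [AddCommGroup V] [Module k V]
    [FiniteDimensional k V] {φ : V →ᵃ[k] V} (h : Injective φ) : Bijective φ :=
  ⟨h, φ.linear_surjective_iff.mp
    (LinearMap.injective_iff_surjective.mp (φ.linear_injective_iff.mpr h))⟩

theorem AffineEquiv.interior_preimage {E V : Type*} [NormedAddCommGroup E] [NormedSpace ℝ E]
    [FiniteDimensional ℝ E] [NormedAddCommGroup V] [NormedSpace ℝ V] (e : E ≃ᵃ[ℝ] V)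
    (s : Set V) : interior (e ⁻¹' s) = e ⁻¹' interior s :=
  (e.toContinuousAffineEquiv.toHomeomorph.preimage_interior s).symm

theorem IsPolyhedron.preimage {n : ℕ} {C : Set (Eu n)} (hC : IsPolyhedron C)
    (φ : Eu n →ᵃ[ℝ] Eu n) : IsPolyhedron (φ ⁻¹' C) := by
  obtain ⟨m, l, c, rfl⟩ := hC
  refine ⟨m, fun i => l i ∘ₗ φ.linear, fun i => c i - l i (φ 0), ?_⟩
  ext y
  have hy : φ y = φ.linear y + φ 0 := congrFun φ.decomp y
  simp only [Set.mem_preimage, Set.mem_ofPred_eq, hy, LinearMap.comp_apply, map_add,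
    le_sub_iff_add_le]

theorem IsPiecewiseAffine.inverse {n N : ℕ} {f g : Eu n → Eu n}
    {F : Fin N → Eu n →ᵃ[ℝ] Eu n} {C : Fin N → Set (Eu n)} (hpa : IsPiecewiseAffine f F C)
    (e : Fin N → Eu n ≃ᵃ[ℝ] Eu n) (he : ∀ i, ⇑(e i) = F i) (hgf : LeftInverse g f)
    (hfg : RightInverse g f) :
    IsPiecewiseAffine g (fun i => (e i).symm.toAffineMap) (fun i => (e i).symm ⁻¹' C i) := by
  obtain ⟨hpoly, hint, hcover, hdisj, hagree⟩ := hpa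
  have hg : ∀ i, ∀ y ∈ (e i).symm ⁻¹' C i, g y = (e i).symm y := by
    intro i y hy
    have hfy : f ((e i).symm y) = y := by
      rw [hagree i _ hy, ← he, AffineEquiv.apply_symm_apply]
    rw [← hgf ((e i).symm y), hfy]
  refine ⟨fun i => (hpoly i).preimage (e i).symm.toAffineMap, fun i => ?_, ?_,
    fun i j hij => ?_, hg⟩
  · rw [AffineEquiv.interior_preimage]
    exact (hint i).preimage (e i).symm.surjective
  · refine Set.eq_univ_of_forall fun y => ?_
    obtain ⟨i, hi⟩ := Set.mem_iUnion.mp (hcover ▸ Set.mem_univ (g y))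
    have hy : y = e i (g y) := by rw [he, ← hagree i _ hi, hfg y]
    refine Set.mem_iUnion.mpr ⟨i, ?_⟩
    rw [Set.mem_preimage, hy, AffineEquiv.symm_apply_apply]
    exact hi
  · refine Set.eq_empty_of_forall_notMem fun y ⟨hi, hj⟩ => ?_
    have hsame : (e i).symm y = (e j).symm y :=
      (hg i y (interior_subset hi)).symm.trans (hg j y (interior_subset hj))
    rw [AffineEquiv.interior_preimage] at hi hj
    exact (hdisj i j hij).subset ⟨hi, hsame ▸ hj⟩

theorem piecewise_affine_inverse_piecewise_affine_general
    {n N : ℕ} (f : Eu n → Eu n) (F : Fin N → (Eu n →ᵃ[ℝ] Eu n))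
    (C : Fin N → Set (Eu n)) (hpa : IsPiecewiseAffine f F C)
    (g : Eu n → Eu n) (hg₁ : Function.LeftInverse g f)
    (hg₂ : Function.RightInverse g f) :
    ∃ (M : ℕ) (G : Fin M → (Eu n →ᵃ[ℝ] Eu n)) (D : Fin M → Set (Eu n)),
      IsPiecewiseAffine g G D := by
  have hinj : ∀ i, Injective (F i) := fun i =>
    (F i).injective_of_injOn (hpa.2.1 i) (hg₁.injective.injOn.congr (hpa.2.2.2.2 i))
  exact ⟨N, _, _, hpa.inverse
    (fun i => AffineEquiv.ofBijective ((F i).bijective_of_injective (hinj i))) (fun _ => rfl)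
    hg₁ hg₂⟩

/-- The inverse of a bijective piecewise affine map
`f : ℝⁿ → ℝⁿ` is itself piecewise affine. -/
theorem piecewise_affine_inverse_piecewise_affine
    {n N : ℕ} (f : Eu n → Eu n) (F : Fin N → (Eu n →ᵃ[ℝ] Eu n))
    (C : Fin N → Set (Eu n)) (hpa : IsPiecewiseAffine f F C)
    (hbij : Function.Bijective f)
    (g : Eu n → Eu n) (hg₁ : Function.LeftInverse g f)
    (hg₂ : Function.RightInverse g f) :
    ∃ (M : ℕ) (G : Fin M → (Eu n →ᵃ[ℝ] Eu n)) (D : Fin M → Set (Eu n)),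
      IsPiecewiseAffine g G D :=
  piecewise_affine_inverse_piecewise_affine_general f F C hpa g hg₁ hg₂
end

section
/- Define g : ℝ² → ℝ² by g(x, y) = (|x| − |y|, |x + y| − |x − y|). Then g(−x, −y) = g(x, y) for all (x, y) ∈ ℝ² (in particular g is not injective), and at every point p ∈ ℝ² at which g is (Fréchet) differentiable, det(Dg(p)) = 2. -/
noncomputable def v2 (x y : ℝ) : Eu 2 := (WithLp.equiv 2 (Fin 2 → ℝ)).symm ![x, y]
noncomputable def v3 (x y z : ℝ) : Eu 3 := (WithLp.equiv 2 (Fin 3 → ℝ)).symm ![x, y, z]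

open Filter Topology Matrix

private lemma v2_c0 (x y : ℝ) : (v2 x y) 0 = x := rfl
private lemma v2_c1 (x y : ℝ) : (v2 x y) 1 = y := rfl
private lemma v2_eta (p : Eu 2) : v2 (p 0) (p 1) = p := by ext i; fin_cases i <;> rfl

private lemma line_diff (a b c d t : ℝ) :
    DifferentiableAt ℝ (fun t : ℝ => v2 (a*t+b) (c*t+d)) t := by
  have h : (fun t : ℝ => v2 (a*t+b) (c*t+d)) = fun t => t • v2 a c + v2 b d := by
    funext t; ext i; fin_cases i <;> simp [v2, mul_comm]
  rw [h]
  exact (differentiableAt_id.smul_const _).add_const _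

private lemma ev_sign {f : Eu 2 → ℝ} (hf : Continuous f) {p : Eu 2} (h : f p ≠ 0) :
    ∀ᶠ q in 𝓝 p, |f q| = (if 0 < f p then (1:ℝ) else -1) * f q := by
  rcases h.lt_or_gt with h' | h'
  · filter_upwards [hf.continuousAt.eventually (eventually_lt_nhds h')] with q hq
    rw [if_neg (not_lt.2 h'.le), abs_of_neg hq]; ring
  · filter_upwards [hf.continuousAt.eventually (eventually_gt_nhds h')] with q hq
    rw [if_pos h', abs_of_pos hq]; ring

/-- The map `g(x, y) = (|x| − |y|, |x + y| − |x − y|)` satisfies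
`g(−x, −y) = g(x, y)` (so it is not injective), yet `det Dg(p) = 2` at every point
`p` of differentiability. -/
theorem tropical_rational_plane_counterexample
    (g : Eu 2 → Eu 2)
    (hg : ∀ x y : ℝ, g (v2 x y) = v2 (|x| - |y|) (|x + y| - |x - y|)) :
    (∀ x y : ℝ, g (v2 (-x) (-y)) = g (v2 x y)) ∧
    ¬ Function.Injective g ∧
    (∀ p : Eu 2, DifferentiableAt ℝ g p →
      LinearMap.det (fderiv ℝ g p).toLinearMap = 2) := by
  have heven : ∀ x y : ℝ, g (v2 (-x) (-y)) = g (v2 x y) := by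
    intro x y
    rw [hg, hg, show -x + -y = -(x+y) by ring, show -x - -y = -(x-y) by ring,
      abs_neg, abs_neg, abs_neg, abs_neg]
  refine ⟨heven, ?_, ?_⟩
  · intro hinj
    have h := hinj (heven 1 0)
    have h2 : (-1 : ℝ) = 1 := by
      have := congrArg (fun v : Eu 2 => v 0) h
      simpa [v2_c0] using this
    norm_num at h2
  · intro p hp
    have hgp : DifferentiableAt ℝ g (v2 (p 0) (p 1)) := by rw [v2_eta]; exact hp
    have key : ∀ (a b c d t₀ : ℝ), a*t₀+b = p 0 → c*t₀+d = p 1 → ∀ i : Fin 2,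
        DifferentiableAt ℝ (fun t : ℝ => (g (v2 (a*t+b) (c*t+d))) i) t₀ := by
      intro a b c d t₀ h1 h2 i
      have hcurve := line_diff a b c d t₀
      have : DifferentiableAt ℝ (fun t : ℝ => g (v2 (a*t+b) (c*t+d))) t₀ := by
        apply DifferentiableAt.comp
        · rw [h1, h2]; exact hgp
        · exact hcurve
      exact ((EuclideanSpace.proj i).differentiableAt).comp t₀ this
    have hx0 : p 0 ≠ 0 := by
      intro h0
      have h := key 1 0 0 (p 1) (p 0) (by ring) (by ring) 0
      simp only [one_mul, zero_mul, zero_add, add_zero, hg, v2_c0] at h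
      have h' : DifferentiableAt ℝ (fun t : ℝ => |t| - |p 1| + |p 1|) (p 0) := h.add_const _
      simp only [sub_add_cancel] at h'
      rw [h0] at h'
      exact not_differentiableAt_abs_zero h'
    have hy0 : p 1 ≠ 0 := by
      intro h0
      have h := key 0 (p 0) 1 0 (p 1) (by ring) (by ring) 0
      simp only [one_mul, zero_mul, zero_add, add_zero, hg, v2_c0] at h
      have h' : DifferentiableAt ℝ (fun t : ℝ => -(|p 0| - |t|) + |p 0|) (p 1) :=
        (h.neg).add_const _
      simp only [neg_sub, sub_add_cancel] at h'
      rw [h0] at h'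
      exact not_differentiableAt_abs_zero h'
    have hs0 : p 0 + p 1 ≠ 0 := by
      intro h0
      have hd : p 0 - p 1 ≠ 0 := by intro h; apply hx0; linarith
      have h := key 1 0 0 (p 1) (p 0) (by ring) (by ring) 1
      simp only [one_mul, zero_mul, zero_add, add_zero, hg, v2_c1] at h
      have h2 : DifferentiableAt ℝ (fun t : ℝ => |t - p 1|) (p 0) :=
        ((differentiableAt_abs hd).comp (p 0) (differentiableAt_id.sub_const (p 1)))
      have h3 : DifferentiableAt ℝ (fun t : ℝ => |t + p 1|) (p 0) := by
        have h4 : DifferentiableAt ℝ (fun t : ℝ => |t + p 1| - |t - p 1| + |t - p 1|) (p 0) :=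
          h.add h2
        have he : (fun t : ℝ => |t + p 1| - |t - p 1| + |t - p 1|)
            = fun t : ℝ => |t + p 1| := by funext t; ring
        rwa [he] at h4
      have h3' : DifferentiableAt ℝ (fun t : ℝ => |t + p 1|) (0 - p 1) := by
        rw [zero_sub, show -p 1 = p 0 by linarith]; exact h3
      have h5 : DifferentiableAt ℝ (fun s : ℝ => |(s - p 1) + p 1|) 0 :=
        h3'.comp 0 (differentiableAt_id.sub_const (p 1))
      have he2 : (fun s : ℝ => |(s - p 1) + p 1|) = fun s : ℝ => |s| := by
        funext s; rw [sub_add_cancel]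
      rw [he2] at h5
      exact not_differentiableAt_abs_zero h5
    have hd0 : p 0 - p 1 ≠ 0 := by
      intro h0
      have hs : p 0 + p 1 ≠ 0 := by intro h; apply hx0; linarith
      have h := key 1 0 0 (p 1) (p 0) (by ring) (by ring) 1
      simp only [one_mul, zero_mul, zero_add, add_zero, hg, v2_c1] at h
      have h2 : DifferentiableAt ℝ (fun t : ℝ => |t + p 1|) (p 0) :=
        ((differentiableAt_abs hs).comp (p 0) (differentiableAt_id.add_const (p 1)))
      have h3 : DifferentiableAt ℝ (fun t : ℝ => |t - p 1|) (p 0) := by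
        have h4 : DifferentiableAt ℝ (fun t : ℝ => |t + p 1| - (|t + p 1| - |t - p 1|)) (p 0) :=
          h2.sub h
        have he : (fun t : ℝ => |t + p 1| - (|t + p 1| - |t - p 1|))
            = fun t : ℝ => |t - p 1| := by funext t; ring
        rwa [he] at h4
      have h3' : DifferentiableAt ℝ (fun t : ℝ => |t - p 1|) ((p 0 - p 1) + p 1) := by
        rw [sub_add_cancel]; exact h3
      have h5 : DifferentiableAt ℝ (fun s : ℝ => |(s + p 1) - p 1|) (p 0 - p 1) :=
        h3'.comp (p 0 - p 1) (differentiableAt_id.add_const (p 1))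
      have he2 : (fun s : ℝ => |(s + p 1) - p 1|) = fun s : ℝ => |s| := by
        funext s; rw [add_sub_cancel_right]
      rw [he2, h0] at h5
      exact not_differentiableAt_abs_zero h5
    obtain ⟨a, ha⟩ : ∃ a : ℝ, a = if 0 < p 0 then (1:ℝ) else -1 := ⟨_, rfl⟩
    obtain ⟨b, hb⟩ : ∃ b : ℝ, b = if 0 < p 1 then (1:ℝ) else -1 := ⟨_, rfl⟩
    obtain ⟨c, hc⟩ : ∃ c : ℝ, c = if 0 < p 0 + p 1 then (1:ℝ) else -1 := ⟨_, rfl⟩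
    obtain ⟨d, hd⟩ : ∃ d : ℝ, d = if 0 < p 0 - p 1 then (1:ℝ) else -1 := ⟨_, rfl⟩
    set M : Matrix (Fin 2) (Fin 2) ℝ := !![a, -b; c - d, c + d] with hM
    set L : Eu 2 →L[ℝ] Eu 2 :=
      LinearMap.toContinuousLinearMap (Matrix.toEuclideanLin M) with hL
    have hproj0 : Continuous fun q : Eu 2 => q 0 := (EuclideanSpace.proj (0 : Fin 2)).continuous
    have hproj1 : Continuous fun q : Eu 2 => q 1 := (EuclideanSpace.proj (1 : Fin 2)).continuous
    have hEq : g =ᶠ[𝓝 p] ⇑L := by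
      have e1 := ev_sign hproj0 hx0
      have e2 := ev_sign hproj1 hy0
      have e3 : ∀ᶠ q in 𝓝 p, |q 0 + q 1| = (if 0 < p 0 + p 1 then (1:ℝ) else -1) * (q 0 + q 1) := ev_sign (hproj0.add hproj1) (show (fun q : Eu 2 => q 0 + q 1) p ≠ 0 from hs0)
      have e4 : ∀ᶠ q in 𝓝 p, |q 0 - q 1| = (if 0 < p 0 - p 1 then (1:ℝ) else -1) * (q 0 - q 1) := ev_sign (hproj0.sub hproj1) (show (fun q : Eu 2 => q 0 - q 1) p ≠ 0 from hd0)
      simp only [← ha] at e1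
      simp only [← hb] at e2
      simp only [← hc] at e3
      simp only [← hd] at e4
      filter_upwards [e1, e2, e3, e4] with q h1 h2 h3 h4
      have hq : g q = v2 (|q 0| - |q 1|) (|q 0 + q 1| - |q 0 - q 1|) := by
        conv_lhs => rw [← v2_eta q, hg]
      have hLq : L q = (WithLp.equiv 2 (Fin 2 → ℝ)).symm
          (Matrix.mulVec M ((WithLp.equiv 2 (Fin 2 → ℝ)) q)) := by
        rw [hL]
        exact Matrix.toEuclideanLin_apply M q
      rw [hq, h1, h2, h3, h4, hLq]
      unfold v2
      congr 1
      funext i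
      fin_cases i <;>
        simp [hM, Matrix.mulVec, dotProduct, Fin.sum_univ_two] <;> ring
    have hfd : fderiv ℝ g p = L := by
      rw [hEq.fderiv_eq, L.fderiv]
    rw [hfd]
    have hcoe : ((L : Eu 2 →L[ℝ] Eu 2).toLinearMap : Eu 2 →ₗ[ℝ] Eu 2)
        = Matrix.toEuclideanLin M := by
      rw [hL]; rfl
    rw [hcoe, Matrix.toEuclideanLin_eq_toLin, LinearMap.det_toLin, hM]
    rw [Matrix.det_fin_two_of]
    rcases hx0.lt_or_gt with hx | hx <;> rcases hy0.lt_or_gt with hy | hy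
    · have hcc : ¬ 0 < p 0 + p 1 := by linarith
      rw [ha, hb, hc, if_neg (not_lt.2 hx.le), if_neg (not_lt.2 hy.le), if_neg hcc]; ring
    · have hdc : ¬ 0 < p 0 - p 1 := by linarith
      rw [ha, hb, hd, if_neg (not_lt.2 hx.le), if_pos hy, if_neg hdc]; ring
    · have hdc : 0 < p 0 - p 1 := by linarith
      rw [ha, hb, hd, if_pos hx, if_neg (not_lt.2 hy.le), if_pos hdc]; ring
    · have hcc : 0 < p 0 + p 1 := by linarith
      rw [ha, hb, hc, if_pos hx, if_pos hy, if_pos hcc]; ring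
end

section
/- Define h : ℝ³ → ℝ³ by h(x, y, z) = (−|y| − |x + y| + z, −|x| − |x − y| + z, −|x + y| − |x| + z). Then h(−x, −y, z) = h(x, y, z) for all (x, y, z) ∈ ℝ³ (in particular h is not injective), and at every point p ∈ ℝ³ at which h is (Fréchet) differentiable, det(Dh(p)) = 2. -/
open Filter Topology SignType

@[simp] lemma v3_apply_zero (x y z : ℝ) : v3 x y z 0 = x := rfl
@[simp] lemma v3_apply_one (x y z : ℝ) : v3 x y z 1 = y := rfl
@[simp] lemma v3_apply_two (x y z : ℝ) : v3 x y z 2 = z := rfl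

lemma v3_eta (q : Eu 3) : v3 (q 0) (q 1) (q 2) = q := by
  ext i; fin_cases i <;> rfl

lemma not_differentiableAt_abs_add_abs {a b : ℝ} (hab : a * b = 0) :
    ¬ DifferentiableAt ℝ (fun t : ℝ => |a + t| + |b + t|) 0 := by
  wlog ha : a = 0 generalizing a b
  · simpa only [add_comm |a + _|] using
      this (mul_comm a b ▸ hab) ((mul_eq_zero.1 hab).resolve_left ha)
  subst ha
  intro hdiff
  by_cases hb : b = 0
  · subst hb
    refine not_differentiableAt_abs_zero ?_
    simpa [← two_mul] using hdiff.const_mul (1 / 2 : ℝ)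
  · have habs_b : DifferentiableAt ℝ (fun t : ℝ => |b + t|) 0 :=
      (differentiableAt_abs (by simpa using hb)).comp 0 (differentiableAt_id.const_add b)
    refine not_differentiableAt_abs_zero <|
      (hdiff.sub habs_b).congr_of_eventuallyEq (.of_forall fun t => ?_)
    simp

lemma eventually_abs_eq_sign_mul {x : ℝ} (hx : x ≠ 0) :
    ∀ᶠ w in 𝓝 x, |w| = (sign x : ℝ) * w := by
  filter_upwards [continuousAt_sign_of_ne_zero hx (isOpen_discrete {sign x} |>.mem_nhds rfl)]
    with w hw
  rw [← hw, sign_mul_self]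

lemma sign_add_mul_add_sign_sub_mul {x y : ℝ} (hxy : x + y ≠ 0) (hxy' : x - y ≠ 0) :
    (sign (x + y) * (sign x + sign y) +
      sign (x - y) * (sign x - sign y) : ℝ) = 2 := by
  rcases hxy.lt_or_gt with hs | hs <;> rcases hxy'.lt_or_gt with hd | hd
  · rw [sign_neg hs, sign_neg hd, sign_neg (by linarith : x < 0),
      SignType.coe_neg, SignType.coe_one]
    ring
  · rw [sign_neg hs, sign_pos hd, sign_neg (by linarith : y < 0),
      SignType.coe_neg, SignType.coe_one]
    ring
  · rw [sign_pos hs, sign_neg hd, sign_pos (by linarith : 0 < y),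
      SignType.coe_neg, SignType.coe_one]
    ring
  · rw [sign_pos hs, sign_pos hd, sign_pos (by linarith : 0 < x),
      SignType.coe_one]
    ring

noncomputable def tropicalMap (q : Eu 3) : Eu 3 :=
  v3 (-|q 1| - |q 0 + q 1| + q 2) (-|q 0| - |q 0 - q 1| + q 2) (-|q 0 + q 1| - |q 0| + q 2)

lemma tropicalMap_neg (x y z : ℝ) : tropicalMap (v3 (-x) (-y) z) = tropicalMap (v3 x y z) := by
  simp only [tropicalMap, v3_apply_zero, v3_apply_one, v3_apply_two, ← neg_add, neg_sub_neg,
    abs_neg, abs_sub_comm y x]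

lemma not_injective_tropicalMap : ¬ Function.Injective tropicalMap := fun hinj =>
  absurd (congrArg (· 0) (hinj (tropicalMap_neg 1 0 0))) (by norm_num)

lemma mul_ne_zero_of_differentiableAt_tropicalMap {p : Eu 3}
    (hp : DifferentiableAt ℝ tropicalMap p) :
    p 1 * (p 0 + p 1) ≠ 0 ∧ p 0 * (p 0 - p 1) ≠ 0 := by
  have hline (i j : Fin 3) : DifferentiableAt ℝ
      (fun t : ℝ => -tropicalMap (p + t • EuclideanSpace.single j 1) i + p 2) 0 :=
    (((EuclideanSpace.proj i).differentiableAt.comp 0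
      (hp.lineDifferentiableAt (v := EuclideanSpace.single j 1))).neg).add_const _
  refine ⟨fun h => not_differentiableAt_abs_add_abs h ?_,
    fun h => not_differentiableAt_abs_add_abs h ?_⟩
  · convert hline 0 1 using 2 with t
    simp only [tropicalMap, v3_apply_zero, PiLp.add_apply, PiLp.smul_apply, PiLp.single_apply,
      Fin.reduceEq, if_true, if_false, smul_eq_mul, mul_one, mul_zero, add_zero]
    ring_nf
  · convert hline 1 0 using 2 with t
    simp only [tropicalMap, v3_apply_one, PiLp.add_apply, PiLp.smul_apply, PiLp.single_apply,
      Fin.reduceEq, if_true, if_false, smul_eq_mul, mul_one, mul_zero, add_zero]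
    ring_nf

section Jacobian

variable (p : Eu 3)

noncomputable def tropicalJacobian : Matrix (Fin 3) (Fin 3) ℝ :=
  !![-sign (p 0 + p 1), -sign (p 1) - sign (p 0 + p 1), 1;
     -sign (p 0) - sign (p 0 - p 1), sign (p 0 - p 1), 1;
     -sign (p 0 + p 1) - sign (p 0), -sign (p 0 + p 1), 1]

lemma det_tropicalJacobian (h₁ : p 0 + p 1 ≠ 0) (h₂ : p 0 - p 1 ≠ 0) :
    (tropicalJacobian p).det = 2 := by
  rw [← sign_add_mul_add_sign_sub_mul h₁ h₂, Matrix.det_fin_three]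
  simp only [tropicalJacobian, Matrix.of_apply, Matrix.cons_val', Matrix.cons_val,
    Matrix.cons_val_fin_one]
  ring

lemma tropicalMap_eventuallyEq_tropicalJacobian (h₀ : p 0 ≠ 0) (h₁ : p 1 ≠ 0)
    (h₂ : p 0 + p 1 ≠ 0) (h₃ : p 0 - p 1 ≠ 0) :
    tropicalMap =ᶠ[𝓝 p] Matrix.toEuclideanCLM (n := Fin 3) (𝕜 := ℝ) (tropicalJacobian p) := by
  have habs {φ : Eu 3 → ℝ} (hφc : Continuous φ) (hφ : φ p ≠ 0) :
      ∀ᶠ q in 𝓝 p, |φ q| = sign (φ p) * φ q :=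
    hφc.continuousAt.eventually (eventually_abs_eq_sign_mul hφ)
  filter_upwards [habs (φ := (· 0)) (by fun_prop) h₀, habs (φ := (· 1)) (by fun_prop) h₁,
    habs (φ := fun q => q 0 + q 1) (by fun_prop) h₂,
    habs (φ := fun q => q 0 - q 1) (by fun_prop) h₃] with q hq₀ hq₁ hq₂ hq₃
  ext i
  fin_cases i <;>
    simp only [tropicalMap, tropicalJacobian, hq₀, hq₁, hq₂, hq₃, Fin.zero_eta, Fin.mk_one,
      Fin.reduceFinMk, v3_apply_zero, v3_apply_one, v3_apply_two, Matrix.ofLp_toEuclideanCLM,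
      Matrix.mulVec, dotProduct, Fin.sum_univ_three, Matrix.of_apply, Matrix.cons_val',
      Matrix.cons_val_fin_one, Matrix.cons_val_zero, Matrix.cons_val_one, Matrix.cons_val] <;>
    ring

end Jacobian

lemma det_fderiv_tropicalMap {p : Eu 3} (hp : DifferentiableAt ℝ tropicalMap p) :
    LinearMap.det (fderiv ℝ tropicalMap p).toLinearMap = 2 := by
  obtain ⟨h₁₂, h₀₃⟩ := mul_ne_zero_of_differentiableAt_tropicalMap hp
  obtain ⟨h₁, h₂⟩ := mul_ne_zero_iff.1 h₁₂
  obtain ⟨h₀, h₃⟩ := mul_ne_zero_iff.1 h₀₃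
  rw [((ContinuousLinearMap.hasFDerivAt _).congr_of_eventuallyEq
      (tropicalMap_eventuallyEq_tropicalJacobian p h₀ h₁ h₂ h₃)).fderiv,
    Matrix.coe_toEuclideanCLM_eq_toEuclideanLin, LinearMap.det_toLpLin,
    det_tropicalJacobian p h₂ h₃]

/-- The map
`h(x, y, z) = (−|y| − |x + y| + z, −|x| − |x − y| + z, −|x + y| − |x| + z)`
satisfies `h(−x, −y, z) = h(x, y, z)` (so it is not injective), yet
`det Dh(p) = 2` at every point `p` of differentiability. -/
theorem tropical_laurent_space_counterexample
    (h : Eu 3 → Eu 3)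
    (hh : ∀ x y z : ℝ, h (v3 x y z) =
      v3 (-|y| - |x + y| + z) (-|x| - |x - y| + z) (-|x + y| - |x| + z)) :
    (∀ x y z : ℝ, h (v3 (-x) (-y) z) = h (v3 x y z)) ∧
    ¬ Function.Injective h ∧
    (∀ p : Eu 3, DifferentiableAt ℝ h p →
      LinearMap.det (fderiv ℝ h p).toLinearMap = 2) := by
  obtain rfl : h = tropicalMap := funext fun q => by rw [← v3_eta q, hh]; rfl
  exact ⟨tropicalMap_neg, not_injective_tropicalMap, fun _ => det_fderiv_tropicalMap⟩
end

section
/- Let φ : ℝ² → ℝ be a minimum of finitely many affine functions, and suppose for some a ∈ ℝ the level set φ⁻¹({a}) is nonempty and not connected. Then φ⁻¹({a}) is the union of two distinct parallel lines, φ is bounded above, and φ attains its supremum at every point of some line parallel to these two lines. -/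
/-- A function `ℝⁿ → ℝ` which is the minimum of a finite nonempty family of affine
functions (a tropical polynomial function). -/
def IsMinOfAffine {n : ℕ} (φ : Eu n → ℝ) : Prop :=
  ∃ (k : ℕ) (A : Fin (k + 1) → (Eu n →ᵃ[ℝ] ℝ)), ∀ x, φ x = ⨅ i, A i x

namespace Aux

variable {k : ℕ}

/-- The min-of-affine function. -/
noncomputable def Phi (A : Fin (k + 1) → (Eu 2 →ᵃ[ℝ] ℝ)) : Eu 2 → ℝ :=
  fun x => ⨅ i, A i x

variable (A : Fin (k + 1) → (Eu 2 →ᵃ[ℝ] ℝ))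

lemma phi_le (x : Eu 2) (i : Fin (k+1)) : Phi A x ≤ A i x :=
  ciInf_le (Set.finite_range _).bddBelow i

lemma le_phi {x : Eu 2} {b : ℝ} (h : ∀ i, b ≤ A i x) : b ≤ Phi A x :=
  le_ciInf h

lemma exists_phi_eq (x : Eu 2) : ∃ i, Phi A x = A i x := by
  obtain ⟨i, hi⟩ := Finite.exists_min (fun i => A i x)
  exact ⟨i, le_antisymm (phi_le A x i) (le_phi A hi)⟩

lemma affine_comb (i : Fin (k+1)) {x y : Eu 2} {p q : ℝ} (hpq : p + q = 1) :
    A i (p • x + q • y) = p * A i x + q * A i y := by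
  have := Convex.combo_affine_apply (x := x) (y := y) (f := A i) hpq
  simpa [smul_eq_mul] using this

lemma phi_concave {x y : Eu 2} {p q : ℝ} (hp : 0 ≤ p) (hq : 0 ≤ q) (hpq : p + q = 1) :
    p * Phi A x + q * Phi A y ≤ Phi A (p • x + q • y) := by
  refine le_phi A fun i => ?_
  rw [affine_comb A i hpq]
  have h1 : p * Phi A x ≤ p * A i x := mul_le_mul_of_nonneg_left (phi_le A x i) hp
  have h2 : q * Phi A y ≤ q * A i y := mul_le_mul_of_nonneg_left (phi_le A y i) hq
  linarith

/-- Strict "beyond the crossing" lemma. -/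
lemma phi_beyond {P1 P2 P3 : Eu 2} {p q a : ℝ} (hp : 0 < p) (hq : 0 < q) (hpq : p + q = 1)
    (h2 : P2 = p • P1 + q • P3) (h2a : Phi A P2 ≤ a) (h1a : a < Phi A P1) :
    Phi A P3 < a := by
  have := phi_concave A hp.le hq.le hpq (x := P1) (y := P3)
  rw [← h2] at this
  by_contra hcon
  push_neg at hcon
  have e1 : p * a < p * Phi A P1 := mul_lt_mul_of_pos_left h1a hp
  have e2 : q * a ≤ q * Phi A P3 := mul_le_mul_of_nonneg_left hcon hq.le
  have e3 : p * a + q * a = a := by rw [← add_mul, hpq, one_mul]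
  linarith

lemma phi_lipschitz_aux (x y : Eu 2) (i : Fin (k+1)) :
    A i x ≤ A i y + ‖LinearMap.toContinuousLinearMap (A i).linear‖ * ‖x - y‖ := by
  have hx : A i x = (A i).linear (x - y) + A i y := by
    have := (A i).map_vadd y (x - y)
    simpa [vadd_eq_add, sub_add_cancel] using this
  have hb : (A i).linear (x - y) ≤ ‖LinearMap.toContinuousLinearMap (A i).linear‖ * ‖x - y‖ := by
    have := (LinearMap.toContinuousLinearMap (A i).linear).le_opNorm (x - y)
    have h2 : (A i).linear (x - y) ≤ ‖(LinearMap.toContinuousLinearMap (A i).linear) (x - y)‖ :=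
      le_abs_self _
    simpa using h2.trans this
  linarith

lemma phi_continuous : Continuous (Phi A) := by
  classical
  set C : ℝ := Finset.univ.sup' Finset.univ_nonempty
      (fun i : Fin (k+1) => ‖LinearMap.toContinuousLinearMap (A i).linear‖) with hC
  have hC0 : 0 ≤ C := by
    have := Finset.le_sup' (b := (0 : Fin (k+1)))
      (fun i : Fin (k+1) => ‖LinearMap.toContinuousLinearMap (A i).linear‖)
      (Finset.mem_univ 0)
    exact (norm_nonneg _).trans this
  have key : ∀ x y : Eu 2, Phi A x ≤ Phi A y + C * ‖x - y‖ := by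
    intro x y
    have : Phi A x - C * ‖x - y‖ ≤ Phi A y := by
      refine le_phi A fun i => ?_
      have h1 := phi_le A x i
      have h2 := phi_lipschitz_aux A x y i
      have h3 : ‖LinearMap.toContinuousLinearMap (A i).linear‖ * ‖x - y‖ ≤ C * ‖x - y‖ := by
        refine mul_le_mul_of_nonneg_right ?_ (norm_nonneg _)
        exact Finset.le_sup' (fun i : Fin (k+1) => ‖LinearMap.toContinuousLinearMap (A i).linear‖) (Finset.mem_univ i)
      linarith
    linarith
  refine (LipschitzWith.of_dist_le_mul (K := C.toNNReal) fun x y => ?_).continuous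
  have h1 := key x y
  have h2 := key y x
  rw [Real.dist_eq, dist_eq_norm]
  have hxy : ‖y - x‖ = ‖x - y‖ := norm_sub_rev y x
  rw [abs_le]
  have hCt : (C.toNNReal : ℝ) = C := Real.coe_toNNReal C hC0
  rw [hCt]
  constructor <;> nlinarith [norm_nonneg (x - y)]

end Aux


namespace Aux2

/-- Standard basis vectors of the plane. -/
noncomputable def E (i : Fin 2) : Eu 2 := EuclideanSpace.single i (1 : ℝ)

lemma E_apply (i j : Fin 2) : E i j = if j = i then (1:ℝ) else 0 := by
  simp [E, EuclideanSpace.single_apply]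

lemma eu_decomp (x : Eu 2) : x = x 0 • E 0 + x 1 • E 1 := by
  ext j
  have : (x 0 • E 0 + x 1 • E 1) j = x 0 * E 0 j + x 1 * E 1 j := rfl
  rw [this, E_apply, E_apply]
  fin_cases j <;> simp

lemma linmap_apply (f : Eu 2 →ₗ[ℝ] ℝ) (x : Eu 2) :
    f x = x 0 * f (E 0) + x 1 * f (E 1) := by
  conv_lhs => rw [eu_decomp x]
  simp [smul_eq_mul]

lemma linmap_ne_zero {f : Eu 2 →ₗ[ℝ] ℝ} (hf : f ≠ 0) : f (E 0) ≠ 0 ∨ f (E 1) ≠ 0 := by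
  by_contra h
  push_neg at h
  refine hf (LinearMap.ext fun x => ?_)
  rw [linmap_apply, h.1, h.2]
  simp

lemma exists_linmap_eq {f : Eu 2 →ₗ[ℝ] ℝ} (hf : f ≠ 0) (m : ℝ) : ∃ z : Eu 2, f z = m := by
  rcases linmap_ne_zero hf with h | h
  · exact ⟨(m / f (E 0)) • E 0, by simp [smul_eq_mul]; field_simp⟩
  · exact ⟨(m / f (E 1)) • E 1, by simp [smul_eq_mul]; field_simp⟩

/-- Two closed half-planes with non-negatively-antiparallel normals intersect. -/
lemma halfplane_meet {f g : Eu 2 →ₗ[ℝ] ℝ} (hf : f ≠ 0) (hg : g ≠ 0)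
    (h : ∀ c : ℝ, c < 0 → g ≠ c • f) (α β : ℝ) : ∃ z : Eu 2, f z ≤ α ∧ g z ≤ β := by
  set f0 := f (E 0); set f1 := f (E 1); set g0 := g (E 0); set g1 := g (E 1)
  by_cases hdet : f0 * g1 - f1 * g0 = 0
  · -- parallel case : g = c • f with c > 0
    have hfc : f0 ≠ 0 ∨ f1 ≠ 0 := linmap_ne_zero hf
    obtain ⟨c, hc0, hc1⟩ : ∃ c : ℝ, g0 = c * f0 ∧ g1 = c * f1 := by
      rcases hfc with h0 | h0
      · exact ⟨g0 / f0, by field_simp, by field_simp; nlinarith⟩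
      · exact ⟨g1 / f1, by field_simp; nlinarith, by field_simp⟩
    have hgc : g = c • f := by
      refine LinearMap.ext fun x => ?_
      rw [linmap_apply g, LinearMap.smul_apply, smul_eq_mul, linmap_apply f]
      rw [show g (E 0) = c * f (E 0) from hc0, show g (E 1) = c * f (E 1) from hc1]; ring
    have hcne : c ≠ 0 := by
      rintro rfl
      exact hg (by simpa using hgc)
    have hcpos : 0 < c := by
      rcases lt_trichotomy c 0 with h'|h'|h'
      · exact absurd hgc (h c h')
      · exact absurd h' hcne
      · exact h'
    obtain ⟨z, hz⟩ := exists_linmap_eq hf (min α (β / c))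
    refine ⟨z, ?_, ?_⟩
    · rw [hz]; exact min_le_left _ _
    · rw [hgc, LinearMap.smul_apply, smul_eq_mul, hz]
      calc c * min α (β / c) ≤ c * (β / c) :=
            mul_le_mul_of_nonneg_left (min_le_right _ _) hcpos.le
        _ = β := by field_simp
  · -- independent case : solve the 2×2 system
    set d := f0 * g1 - f1 * g0
    refine ⟨((α * g1 - β * f1) / d) • E 0 + ((β * f0 - α * g0) / d) • E 1, ?_, ?_⟩
    · rw [linmap_apply f]
      have e0 : (((α * g1 - β * f1) / d) • E 0 + ((β * f0 - α * g0) / d) • E 1) 0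
          = (α * g1 - β * f1) / d := by
        have : (((α * g1 - β * f1) / d) • E 0 + ((β * f0 - α * g0) / d) • E 1) 0
            = ((α * g1 - β * f1) / d) * E 0 0 + ((β * f0 - α * g0) / d) * E 1 0 := rfl
        rw [this, E_apply, E_apply]; norm_num
      have e1 : (((α * g1 - β * f1) / d) • E 0 + ((β * f0 - α * g0) / d) • E 1) 1
          = (β * f0 - α * g0) / d := by
        have : (((α * g1 - β * f1) / d) • E 0 + ((β * f0 - α * g0) / d) • E 1) 1
            = ((α * g1 - β * f1) / d) * E 0 1 + ((β * f0 - α * g0) / d) * E 1 1 := rfl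
        rw [this, E_apply, E_apply]; norm_num
      rw [e0, e1]
      have : (α * g1 - β * f1) / d * f0 + (β * f0 - α * g0) / d * f1 = α := by
        field_simp
        ring
      rw [this]
    · rw [linmap_apply g]
      have e0 : (((α * g1 - β * f1) / d) • E 0 + ((β * f0 - α * g0) / d) • E 1) 0
          = (α * g1 - β * f1) / d := by
        have : (((α * g1 - β * f1) / d) • E 0 + ((β * f0 - α * g0) / d) • E 1) 0
            = ((α * g1 - β * f1) / d) * E 0 0 + ((β * f0 - α * g0) / d) * E 1 0 := rfl
        rw [this, E_apply, E_apply]; norm_num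
      have e1 : (((α * g1 - β * f1) / d) • E 0 + ((β * f0 - α * g0) / d) • E 1) 1
          = (β * f0 - α * g0) / d := by
        have : (((α * g1 - β * f1) / d) • E 0 + ((β * f0 - α * g0) / d) • E 1) 1
            = ((α * g1 - β * f1) / d) * E 0 1 + ((β * f0 - α * g0) / d) * E 1 1 := rfl
        rw [this, E_apply, E_apply]; norm_num
      rw [e0, e1]
      have : (α * g1 - β * f1) / d * g0 + (β * f0 - α * g0) / d * g1 = β := by
        field_simp
        ring
      rw [this]

end Aux2

namespace Aux3
open Aux Aux2

variable {k : ℕ} (A : Fin (k + 1) → (Eu 2 →ᵃ[ℝ] ℝ))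

lemma affine_eq_linear_add (i : Fin (k+1)) (z : Eu 2) :
    A i z = (A i).linear z + A i 0 := by
  have := (A i).map_vadd 0 z
  simpa [vadd_eq_add] using this

lemma halfplane_convex (i : Fin (k+1)) (a : ℝ) :
    Convex ℝ {z : Eu 2 | A i z ≤ a} := by
  intro x hx y hy p q hp hq hpq
  simp only [Set.mem_setOf_eq] at *
  rw [affine_comb A i hpq]
  have h1 : p * A i x ≤ p * a := mul_le_mul_of_nonneg_left hx hp
  have h2 : q * A i y ≤ q * a := mul_le_mul_of_nonneg_left hy hq
  have e3 : p * a + q * a = a := by rw [← add_mul, hpq, one_mul]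
  linarith

/-- A normal vector rotated by 90 degrees. -/
noncomputable def perp (f : Eu 2 →ₗ[ℝ] ℝ) : Eu 2 := (-(f (E 1))) • E 0 + f (E 0) • E 1

lemma perp_apply (f : Eu 2 →ₗ[ℝ] ℝ) :
    perp f 0 = -(f (E 1)) ∧ perp f 1 = f (E 0) := by
  constructor
  · have : perp f 0 = (-(f (E 1))) * E 0 0 + f (E 0) * E 1 0 := rfl
    rw [this, E_apply, E_apply]; norm_num
  · have : perp f 1 = (-(f (E 1))) * E 0 1 + f (E 0) * E 1 1 := rfl
    rw [this, E_apply, E_apply]; norm_num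

lemma perp_ne_zero {f : Eu 2 →ₗ[ℝ] ℝ} (hf : f ≠ 0) : perp f ≠ 0 := by
  intro h
  rcases linmap_ne_zero hf with h0 | h0
  · exact h0 (by have : perp f 1 = (0 : Eu 2) 1 := (by rw [h]); rw [(perp_apply f).2] at this; simpa using this)
  · exact h0 (by
      have : perp f 0 = (0 : Eu 2) 0 := by rw [h]
      rw [(perp_apply f).1] at this
      have : -(f (E 1)) = 0 := by simpa using this
      linarith [neg_eq_zero.mp this])

lemma f_perp (f : Eu 2 →ₗ[ℝ] ℝ) : f (perp f) = 0 := by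
  rw [linmap_apply f (perp f), (perp_apply f).1, (perp_apply f).2]
  ring

/-- In the line-free case, the sublevel set `{φ ≤ a}` is preconnected. -/
lemma sublevel_preconnected (a : ℝ) (x₀ : Eu 2) (hx₀ : a < Phi A x₀)
    (H : ∀ v : Eu 2, v ≠ 0 → ∃ i, (A i).linear v ≠ 0) :
    IsPreconnected {x : Eu 2 | Phi A x ≤ a} := by
  classical
  -- for every point of the sublevel set, a halfplane through it avoiding the superlevel set
  have hpl : ∀ x : Eu 2, Phi A x ≤ a → ∃ i, A i x ≤ a ∧ (A i).linear ≠ 0 := by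
    intro x hx
    obtain ⟨i, hi⟩ := exists_phi_eq A x
    refine ⟨i, by linarith [hi], ?_⟩
    intro h0
    -- then A i is constant ≤ a, so Phi A x₀ ≤ a
    have hconst : A i x₀ = A i x := by
      rw [affine_eq_linear_add A i x₀, affine_eq_linear_add A i x, h0]
      simp
    have := phi_le A x₀ i
    rw [hconst] at this
    linarith [hi]
  -- disjointness of two halfplanes forces antiparallel normals
  have hdisj : ∀ i j : Fin (k+1), (A i).linear ≠ 0 → (A j).linear ≠ 0 →
      ({z : Eu 2 | A i z ≤ a} ∩ {z : Eu 2 | A j z ≤ a} = ∅) →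
      ∃ c : ℝ, c < 0 ∧ (A j).linear = c • (A i).linear := by
    intro i j hi hj hempty
    by_contra hcon
    push_neg at hcon
    obtain ⟨z, hz1, hz2⟩ := halfplane_meet hi hj (fun c hc => hcon c hc) (a - A i 0) (a - A j 0)
    have hz1' : A i z ≤ a := by rw [affine_eq_linear_add A i z]; linarith
    have hz2' : A j z ≤ a := by rw [affine_eq_linear_add A j z]; linarith
    have hzm : z ∈ ({z : Eu 2 | A i z ≤ a} ∩ {z : Eu 2 | A j z ≤ a}) := ⟨hz1', hz2'⟩
    rw [hempty] at hzm
    exact hzm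
  refine isPreconnected_of_forall_pair ?_
  intro x hx y hy
  simp only [Set.mem_setOf_eq] at hx hy
  obtain ⟨i, hix, hilin⟩ := hpl x hx
  obtain ⟨j, hjy, hjlin⟩ := hpl y hy
  set Hx := {z : Eu 2 | A i z ≤ a}
  set Hy := {z : Eu 2 | A j z ≤ a}
  have hHxS : Hx ⊆ {x : Eu 2 | Phi A x ≤ a} := fun z hz => le_trans (phi_le A z i) hz
  have hHyS : Hy ⊆ {x : Eu 2 | Phi A x ≤ a} := fun z hz => le_trans (phi_le A z j) hz
  by_cases hmeet : (Hx ∩ Hy).Nonempty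
  · obtain ⟨p, hp1, hp2⟩ := hmeet
    refine ⟨Hx ∪ Hy, Set.union_subset hHxS hHyS, Or.inl hix, Or.inr hjy, ?_⟩
    exact IsPreconnected.union p hp1 hp2 (halfplane_convex A i a).isPreconnected
      (halfplane_convex A j a).isPreconnected
  · -- disjoint parallel halfplanes: bridge through a third halfplane
    rw [Set.not_nonempty_iff_eq_empty] at hmeet
    obtain ⟨c, hc, hcc⟩ := hdisj i j hilin hjlin hmeet
    set v := perp (A i).linear
    have hv : v ≠ 0 := perp_ne_zero hilin
    obtain ⟨m, hm⟩ := H v hv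
    have hmlin : (A m).linear ≠ 0 := by
      intro h0; rw [h0] at hm; exact hm (by simp)
    set Hw := {z : Eu 2 | A m z ≤ a}
    have hHwS : Hw ⊆ {x : Eu 2 | Phi A x ≤ a} := fun z hz => le_trans (phi_le A z m) hz
    have hwx : (Hx ∩ Hw).Nonempty := by
      rcases Set.eq_empty_or_nonempty (Hx ∩ Hw) with he | hn
      · obtain ⟨c', hc', hcc'⟩ := hdisj i m hilin hmlin he
        exfalso
        apply hm
        rw [hcc', LinearMap.smul_apply, f_perp (A i).linear, smul_zero]
      · exact hn
    have hwy : (Hy ∩ Hw).Nonempty := by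
      rcases Set.eq_empty_or_nonempty (Hy ∩ Hw) with he | hn
      · obtain ⟨c', hc', hcc'⟩ := hdisj j m hjlin hmlin he
        exfalso
        apply hm
        rw [hcc', hcc, smul_smul, LinearMap.smul_apply, f_perp (A i).linear, smul_zero]
      · exact hn
    obtain ⟨p1, hp1x, hp1w⟩ := hwx
    obtain ⟨p2, hp2y, hp2w⟩ := hwy
    refine ⟨Hx ∪ Hw ∪ Hy, ?_, Or.inl (Or.inl hix), Or.inr hjy, ?_⟩
    · exact Set.union_subset (Set.union_subset hHxS hHwS) hHyS
    · have h1 : IsPreconnected (Hx ∪ Hw) :=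
        IsPreconnected.union p1 hp1x hp1w (halfplane_convex A i a).isPreconnected
          (halfplane_convex A m a).isPreconnected
      exact IsPreconnected.union p2 (Or.inr hp2w) hp2y h1
        (halfplane_convex A j a).isPreconnected

end Aux3

namespace Aux4
open Aux Aux2 Aux3

variable {k : ℕ} (A : Fin (k + 1) → (Eu 2 →ᵃ[ℝ] ℝ)) (a : ℝ) (x₀ : Eu 2)

lemma seg_combo {t s : ℝ} (hs : s ≠ 0) (z : Eu 2) :
    (1 - t/s) • x₀ + (t/s) • (x₀ + s • (z - x₀)) = x₀ + t • (z - x₀) := by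
  rw [smul_add, smul_smul, div_mul_cancel₀ t hs, sub_smul, one_smul]
  abel

lemma beyond_seg (hx₀ : a < Phi A x₀) (z : Eu 2) {t s : ℝ} (ht0 : 0 < t)
    (hta : Phi A (x₀ + t • (z - x₀)) ≤ a) (hts : t < s) :
    Phi A (x₀ + s • (z - x₀)) < a := by
  have hs0 : 0 < s := ht0.trans hts
  refine phi_beyond A (p := 1 - t/s) (q := t/s)
    (by rw [sub_pos]; exact (div_lt_one hs0).2 hts)
    (div_pos ht0 hs0) (by ring) (seg_combo x₀ hs0.ne' z).symm hta hx₀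

lemma root_lt (hx₀ : a < Phi A x₀) (z : Eu 2) {t s : ℝ} (ht0 : 0 < t)
    (hroot : Phi A (x₀ + t • (z - x₀)) = a) (hs0 : 0 ≤ s) (hst : s < t) :
    a < Phi A (x₀ + s • (z - x₀)) := by
  rcases eq_or_lt_of_le hs0 with h | h
  · rw [← h]
    simpa using hx₀
  · by_contra hcon
    push_neg at hcon
    have := beyond_seg A a x₀ hx₀ z h hcon hst
    rw [hroot] at this
    exact lt_irrefl a this

open Classical in
/-- The crossing parameter of the segment from the interior point `x₀` to `z`. -/
noncomputable def tau (z : Eu 2) : ℝ :=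
  if h : ∃ t, t ∈ Set.Ioc (0:ℝ) 1 ∧ Phi A (x₀ + t • (z - x₀)) = a then h.choose else 1

lemma tau_spec (hx₀ : a < Phi A x₀) {z : Eu 2} (hz : Phi A z ≤ a) :
    tau A a x₀ z ∈ Set.Ioc (0:ℝ) 1 ∧ Phi A (x₀ + tau A a x₀ z • (z - x₀)) = a := by
  have hex : ∃ t, t ∈ Set.Ioc (0:ℝ) 1 ∧ Phi A (x₀ + t • (z - x₀)) = a := by
    have hcont : ContinuousOn (fun t : ℝ => Phi A (x₀ + t • (z - x₀))) (Set.Icc 0 1) := by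
      refine Continuous.continuousOn ?_
      exact (phi_continuous A).comp (continuous_const.add (continuous_id.smul continuous_const))
    have him := intermediate_value_Icc' (zero_le_one (α := ℝ)) hcont
    have ha : a ∈ Set.Icc (Phi A (x₀ + (1:ℝ) • (z - x₀))) (Phi A (x₀ + (0:ℝ) • (z - x₀))) := by
      constructor
      · simpa using hz
      · simpa using hx₀.le
    obtain ⟨t, htmem, hteq⟩ := him ha
    refine ⟨t, ⟨?_, htmem.2⟩, hteq⟩
    rcases eq_or_lt_of_le htmem.1 with h | h
    · exfalso
      rw [← h] at hteq
      simp at hteq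
      linarith
    · exact h
  rw [tau, dif_pos hex]
  exact hex.choose_spec

lemma tau_eq_one (hx₀ : a < Phi A x₀) {z : Eu 2} (hz : Phi A z = a) :
    tau A a x₀ z = 1 := by
  obtain ⟨⟨h0, h1⟩, heq⟩ := tau_spec A a x₀ hx₀ hz.le
  by_contra h
  have hlt : tau A a x₀ z < 1 := lt_of_le_of_ne h1 h
  have := beyond_seg A a x₀ hx₀ z h0 heq.le hlt
  simp at this
  linarith

lemma tau_continuousOn (hx₀ : a < Phi A x₀) :
    ContinuousOn (tau A a x₀) {z : Eu 2 | Phi A z ≤ a} := by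
  rw [Metric.continuousOn_iff]
  intro z hz ε hε
  simp only [Set.mem_setOf_eq] at hz
  obtain ⟨⟨ht0, ht1⟩, hroot⟩ := tau_spec A a x₀ hx₀ hz
  set t := tau A a x₀ z with htdef
  set ε₁ : ℝ := min (ε/2) (t/2) with hε₁
  have hε₁0 : 0 < ε₁ := lt_min (by linarith) (by linarith)
  have hε₁t : ε₁ ≤ t/2 := min_le_right _ _
  have hε₁ε : ε₁ ≤ ε/2 := min_le_left _ _
  -- lower bound neighbourhood
  have hlow : a < Phi A (x₀ + (t - ε₁) • (z - x₀)) :=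
    root_lt A a x₀ hx₀ z ht0 hroot (by linarith) (by linarith)
  have hopen1 : IsOpen {w : Eu 2 | a < Phi A (x₀ + (t - ε₁) • (w - x₀))} := by
    refine isOpen_lt continuous_const ?_
    exact (phi_continuous A).comp (continuous_const.add (by fun_prop))
  obtain ⟨δ₁, hδ₁0, hδ₁⟩ := Metric.isOpen_iff.1 hopen1 z hlow
  -- upper bound neighbourhood
  rcases eq_or_lt_of_le ht1 with hteq1 | htlt1
  · -- t = 1 : only the lower bound matters
    refine ⟨δ₁, hδ₁0, fun w hw hdist => ?_⟩
    simp only [Set.mem_setOf_eq] at hw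
    obtain ⟨⟨hw0, hw1⟩, hwroot⟩ := tau_spec A a x₀ hx₀ hw
    have hball := hδ₁ (Metric.mem_ball.2 hdist)
    simp only [Set.mem_setOf_eq] at hball
    have hlb : t - ε₁ < tau A a x₀ w := by
      by_contra hcon
      push_neg at hcon
      rcases eq_or_lt_of_le hcon with h | h
      · rw [h] at hwroot; linarith [hwroot, hball]
      · have := beyond_seg A a x₀ hx₀ w hw0 hwroot.le h
        linarith
    rw [Real.dist_eq, abs_lt]
    constructor
    · linarith
    · have : tau A a x₀ w ≤ 1 := hw1
      rw [← hteq1] at this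
      linarith
  · -- t < 1
    set s₂ : ℝ := min (t + ε₁) ((t+1)/2) with hs₂
    have hs₂t : t < s₂ := lt_min (by linarith) (by linarith)
    have hs₂1 : s₂ ≤ 1 := le_trans (min_le_right _ _) (by linarith)
    have hs₂ε : s₂ ≤ t + ε₁ := min_le_left _ _
    have hhigh : Phi A (x₀ + s₂ • (z - x₀)) < a :=
      beyond_seg A a x₀ hx₀ z ht0 hroot.le hs₂t
    have hopen2 : IsOpen {w : Eu 2 | Phi A (x₀ + s₂ • (w - x₀)) < a} := by
      refine isOpen_lt ?_ continuous_const
      exact (phi_continuous A).comp (continuous_const.add (by fun_prop))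
    obtain ⟨δ₂, hδ₂0, hδ₂⟩ := Metric.isOpen_iff.1 hopen2 z hhigh
    refine ⟨min δ₁ δ₂, lt_min hδ₁0 hδ₂0, fun w hw hdist => ?_⟩
    simp only [Set.mem_setOf_eq] at hw
    obtain ⟨⟨hw0, hw1⟩, hwroot⟩ := tau_spec A a x₀ hx₀ hw
    have hball1 := hδ₁ (Metric.mem_ball.2 (lt_of_lt_of_le hdist (min_le_left _ _)))
    have hball2 := hδ₂ (Metric.mem_ball.2 (lt_of_lt_of_le hdist (min_le_right _ _)))
    simp only [Set.mem_setOf_eq] at hball1 hball2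
    have hlb : t - ε₁ < tau A a x₀ w := by
      by_contra hcon
      push_neg at hcon
      rcases eq_or_lt_of_le hcon with h | h
      · rw [h] at hwroot; linarith
      · have := beyond_seg A a x₀ hx₀ w hw0 hwroot.le h
        linarith
    have hub : tau A a x₀ w < s₂ := by
      by_contra hcon
      push_neg at hcon
      rcases eq_or_lt_of_le hcon with h | h
      · rw [h] at hball2; linarith [hwroot]
      · have hc := root_lt A a x₀ hx₀ w hw0 hwroot (by linarith [hs₂t, ht0] : (0:ℝ) ≤ s₂) h
        linarith
    rw [Real.dist_eq, abs_lt]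
    constructor <;> [skip; skip] <;> linarith

/-- If the sublevel set is preconnected, so is the level set. -/
lemma level_preconnected (hx₀ : a < Phi A x₀)
    (hS : IsPreconnected {x : Eu 2 | Phi A x ≤ a}) :
    IsPreconnected {x : Eu 2 | Phi A x = a} := by
  set S := {x : Eu 2 | Phi A x ≤ a}
  set r : Eu 2 → Eu 2 := fun z => x₀ + tau A a x₀ z • (z - x₀) with hr
  have hrc : ContinuousOn r S := by
    refine continuousOn_const.add ?_
    exact (tau_continuousOn A a x₀ hx₀).smul
      ((continuous_id.sub continuous_const).continuousOn)
  have himg : r '' S = {x : Eu 2 | Phi A x = a} := by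
    apply Set.Subset.antisymm
    · rintro _ ⟨z, hzS, rfl⟩
      exact (tau_spec A a x₀ hx₀ hzS).2
    · intro y hy
      have hyS : y ∈ S := le_of_eq hy
      refine ⟨y, hyS, ?_⟩
      rw [hr]
      simp only
      rw [tau_eq_one A a x₀ hx₀ hy, one_smul]
      abel
  rw [← himg]
  exact hS.image r hrc

end Aux4

namespace Aux5
open Aux Aux2 Aux3 Aux4

variable {k : ℕ} (A : Fin (k + 1) → (Eu 2 →ᵃ[ℝ] ℝ)) (a : ℝ) (v : Eu 2)

/-- The rotation of `v` by 90 degrees. -/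
noncomputable def Jv : Eu 2 := (-(v 1)) • E 0 + (v 0) • E 1

lemma Jv_apply : Jv v 0 = -(v 1) ∧ Jv v 1 = v 0 := by
  constructor
  · have : Jv v 0 = (-(v 1)) * E 0 0 + (v 0) * E 1 0 := rfl
    rw [this, E_apply, E_apply]; norm_num
  · have : Jv v 1 = (-(v 1)) * E 0 1 + (v 0) * E 1 1 := rfl
    rw [this, E_apply, E_apply]; norm_num

/-- The linear functional vanishing on `v`. -/
def uu : Eu 2 → ℝ := fun x => -(v 1) * x 0 + v 0 * x 1

/-- Squared norm of `v`. -/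
def Nv : ℝ := v 0 ^ 2 + v 1 ^ 2

lemma Nv_pos (hv : v ≠ 0) : 0 < Nv v := by
  have h : v 0 ≠ 0 ∨ v 1 ≠ 0 := by
    by_contra h
    push_neg at h
    apply hv
    ext j
    fin_cases j
    · exact h.1
    · exact h.2
  rcases h with h | h
  · have : 0 < v 0 ^ 2 := by positivity
    have : 0 ≤ v 1 ^ 2 := sq_nonneg _
    rw [Nv]; nlinarith
  · have : 0 < v 1 ^ 2 := by positivity
    have : 0 ≤ v 0 ^ 2 := sq_nonneg _
    rw [Nv]; nlinarith

/-- The point on the transversal axis with `uu`-value `t`. -/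
noncomputable def pt (t : ℝ) : Eu 2 := (t / Nv v) • Jv v

lemma pt_apply (t : ℝ) : pt v t 0 = (t / Nv v) * (-(v 1)) ∧ pt v t 1 = (t / Nv v) * v 0 := by
  constructor
  · have : pt v t 0 = (t / Nv v) * Jv v 0 := rfl
    rw [this, (Jv_apply v).1]
  · have : pt v t 1 = (t / Nv v) * Jv v 1 := rfl
    rw [this, (Jv_apply v).2]

lemma uu_pt (hv : v ≠ 0) (t : ℝ) : uu v (pt v t) = t := by
  have hN := Nv_pos v hv
  rw [uu]
  simp only
  rw [(pt_apply v t).1, (pt_apply v t).2]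
  field_simp [Nv] at *
  unfold Nv
  ring

lemma uu_add_smul (x : Eu 2) (t : ℝ) : uu v (x + t • v) = uu v x := by
  have h0 : (x + t • v) 0 = x 0 + t * v 0 := rfl
  have h1 : (x + t • v) 1 = x 1 + t * v 1 := rfl
  show -(v 1) * (x + t • v) 0 + v 0 * (x + t • v) 1 = -(v 1) * x 0 + v 0 * x 1
  rw [h0, h1]; ring

lemma pt_combo (p q s t : ℝ) : pt v (p * s + q * t) = p • pt v s + q • pt v t := by
  rw [pt, pt, pt]
  rw [show (p * s + q * t) / Nv v = p * (s / Nv v) + q * (t / Nv v) by ring]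
  rw [add_smul, mul_smul, mul_smul]

/-- If two points have the same `uu`-value, they differ by a multiple of `v`. -/
lemma uu_fiber (hv : v ≠ 0) {x y : Eu 2} (h : uu v x = uu v y) : ∃ s : ℝ, x = y + s • v := by
  have hN := Nv_pos v hv
  set d0 : ℝ := x 0 - y 0
  set d1 : ℝ := x 1 - y 1
  have hd : -(v 1) * d0 + v 0 * d1 = 0 := by
    have hx : uu v x = -(v 1) * x 0 + v 0 * x 1 := rfl
    have hy : uu v y = -(v 1) * y 0 + v 0 * y 1 := rfl
    rw [hx, hy] at h
    simp only [d0, d1]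
    ring_nf
    ring_nf at h
    linarith
  have h1 : v 0 * d1 = v 1 * d0 := by linarith
  refine ⟨(v 0 * d0 + v 1 * d1) / Nv v, ?_⟩
  ext j
  have hadd : ∀ (w : Eu 2) (s : ℝ) (j : Fin 2), (w + s • v) j = w j + s * v j := fun _ _ _ => rfl
  fin_cases j
  · show x 0 = (y + _ • v) 0
    rw [hadd]
    have : (v 0 * d0 + v 1 * d1) / Nv v * v 0 = d0 := by
      rw [div_mul_eq_mul_div, div_eq_iff hN.ne', Nv]
      linear_combination v 1 * h1
    rw [this]; simp only [d0]; ring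
  · show x 1 = (y + _ • v) 1
    rw [hadd]
    have : (v 0 * d0 + v 1 * d1) / Nv v * v 1 = d1 := by
      rw [div_mul_eq_mul_div, div_eq_iff hN.ne', Nv]
      linear_combination (-(v 0)) * h1
    rw [this]; simp only [d1]; ring

/-- `Phi` is invariant under translations by `v` when all linear parts kill `v`. -/
lemma phi_shift (hlin : ∀ i, (A i).linear v = 0) (x : Eu 2) (s : ℝ) :
    Phi A (x + s • v) = Phi A x := by
  have : ∀ i, A i (x + s • v) = A i x := by
    intro i
    have := (A i).map_vadd x (s • v)
    rw [vadd_eq_add, vadd_eq_add, map_smul, hlin i, smul_zero, zero_add, add_comm] at this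
    exact this
  rw [Phi, Phi]
  exact iInf_congr this

/-- The one–variable profile of `Phi`. -/
noncomputable def gg (v : Eu 2) : ℝ → ℝ := fun t => Phi A (pt v t)

lemma phi_factor (hv : v ≠ 0) (hlin : ∀ i, (A i).linear v = 0) (x : Eu 2) :
    Phi A x = gg A v (uu v x) := by
  have h : uu v x = uu v (pt v (uu v x)) := (uu_pt v hv (uu v x)).symm
  obtain ⟨s, hs⟩ := uu_fiber v hv h
  calc Phi A x = Phi A (pt v (uu v x) + s • v) := by rw [← hs]
    _ = Phi A (pt v (uu v x)) := phi_shift A v hlin _ _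
    _ = gg A v (uu v x) := rfl

lemma gg_cont : Continuous (gg A v) := by
  have hpt : Continuous (pt v) := by
    show Continuous fun t : ℝ => (t / Nv v) • Jv v
    exact (continuous_id.div_const _).smul continuous_const
  exact (phi_continuous A).comp hpt

lemma gg_concave {s t p q : ℝ} (hp : 0 ≤ p) (hq : 0 ≤ q) (hpq : p + q = 1) :
    p * gg A v s + q * gg A v t ≤ gg A v (p * s + q * t) := by
  have : pt v (p * s + q * t) = p • pt v s + q • pt v t := pt_combo v p q s t
  show p * Phi A (pt v s) + q * Phi A (pt v t) ≤ Phi A (pt v (p * s + q * t))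
  rw [this]
  exact phi_concave A hp hq hpq

lemma gg_beyond {w₁ w₂ w₃ : ℝ} (h12 : w₁ < w₂) (h23 : w₂ < w₃)
    (h2 : gg A v w₂ ≤ a) (h1 : a < gg A v w₁) :
    gg A v w₃ < a := by
  have h13 : w₁ < w₃ := h12.trans h23
  have hne : w₃ - w₁ ≠ 0 := by intro h; linarith [h13]; 
  have hpq : (w₃ - w₂) / (w₃ - w₁) + (w₂ - w₁) / (w₃ - w₁) = 1 := by
    rw [← add_div, show w₃ - w₂ + (w₂ - w₁) = w₃ - w₁ by ring]
    exact div_self hne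
  have hcombo : (w₃ - w₂) / (w₃ - w₁) * w₁ + (w₂ - w₁) / (w₃ - w₁) * w₃ = w₂ := by
    rw [div_mul_eq_mul_div, div_mul_eq_mul_div, ← add_div, div_eq_iff hne]; ring
  exact phi_beyond A (P1 := pt v w₁) (P2 := pt v w₂) (P3 := pt v w₃)
    (p := (w₃ - w₂) / (w₃ - w₁)) (q := (w₂ - w₁) / (w₃ - w₁))
    (div_pos (by linarith) (by linarith)) (div_pos (by linarith) (by linarith))
    hpq (by rw [← pt_combo, hcombo]) h2 h1

lemma gg_beyond' {w₁ w₂ w₃ : ℝ} (h12 : w₂ < w₁) (h23 : w₃ < w₂)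
    (h2 : gg A v w₂ ≤ a) (h1 : a < gg A v w₁) :
    gg A v w₃ < a := by
  have h13 : w₃ < w₁ := h23.trans h12
  have hne : w₁ - w₃ ≠ 0 := by intro h; linarith [h13]
  have hpq : (w₂ - w₃) / (w₁ - w₃) + (w₁ - w₂) / (w₁ - w₃) = 1 := by
    rw [← add_div, show w₂ - w₃ + (w₁ - w₂) = w₁ - w₃ by ring]
    exact div_self hne
  have hcombo : (w₂ - w₃) / (w₁ - w₃) * w₁ + (w₁ - w₂) / (w₁ - w₃) * w₃ = w₂ := by
    rw [div_mul_eq_mul_div, div_mul_eq_mul_div, ← add_div, div_eq_iff hne]; ring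
  exact phi_beyond A (P1 := pt v w₁) (P2 := pt v w₂) (P3 := pt v w₃)
    (p := (w₂ - w₃) / (w₁ - w₃)) (q := (w₁ - w₂) / (w₁ - w₃))
    (div_pos (by linarith) (by linarith)) (div_pos (by linarith) (by linarith))
    hpq (by rw [← pt_combo, hcombo]) h2 h1

lemma gg_mid_ge {w₁ w₂ w₃ : ℝ} (h12 : w₁ < w₂) (h23 : w₂ < w₃)
    (h1 : a ≤ gg A v w₁) (h3 : a ≤ gg A v w₃) :
    a ≤ gg A v w₂ := by
  have h13 : w₁ < w₃ := h12.trans h23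
  have hne : w₃ - w₁ ≠ 0 := by intro h; linarith [h13]
  have hp : 0 < (w₃ - w₂) / (w₃ - w₁) := div_pos (by linarith) (by linarith)
  have hq : 0 < (w₂ - w₁) / (w₃ - w₁) := div_pos (by linarith) (by linarith)
  have hpq : (w₃ - w₂) / (w₃ - w₁) + (w₂ - w₁) / (w₃ - w₁) = 1 := by
    rw [← add_div, show w₃ - w₂ + (w₂ - w₁) = w₃ - w₁ by ring]
    exact div_self hne
  have hcombo : (w₃ - w₂) / (w₃ - w₁) * w₁ + (w₂ - w₁) / (w₃ - w₁) * w₃ = w₂ := by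
    rw [div_mul_eq_mul_div, div_mul_eq_mul_div, ← add_div, div_eq_iff hne]; ring
  have hcc := gg_concave A v (s := w₁) (t := w₃) hp.le hq.le hpq
  rw [hcombo] at hcc
  have e3 : (w₃ - w₂) / (w₃ - w₁) * a + (w₂ - w₁) / (w₃ - w₁) * a = a := by
    rw [← add_mul, hpq, one_mul]
  nlinarith

lemma gg_mid_gt {w₁ w₂ w₃ : ℝ} (h12 : w₁ < w₂) (h23 : w₂ < w₃)
    (h1 : a ≤ gg A v w₁) (h3 : a ≤ gg A v w₃)
    (hstrict : a < gg A v w₁ ∨ a < gg A v w₃) :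
    a < gg A v w₂ := by
  have h13 : w₁ < w₃ := h12.trans h23
  have hne : w₃ - w₁ ≠ 0 := by intro h; linarith [h13]
  have hp : 0 < (w₃ - w₂) / (w₃ - w₁) := div_pos (by linarith) (by linarith)
  have hq : 0 < (w₂ - w₁) / (w₃ - w₁) := div_pos (by linarith) (by linarith)
  have hpq : (w₃ - w₂) / (w₃ - w₁) + (w₂ - w₁) / (w₃ - w₁) = 1 := by
    rw [← add_div, show w₃ - w₂ + (w₂ - w₁) = w₃ - w₁ by ring]
    exact div_self hne
  have hcombo : (w₃ - w₂) / (w₃ - w₁) * w₁ + (w₂ - w₁) / (w₃ - w₁) * w₃ = w₂ := by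
    rw [div_mul_eq_mul_div, div_mul_eq_mul_div, ← add_div, div_eq_iff hne]; ring
  have hcc := gg_concave A v (s := w₁) (t := w₃) hp.le hq.le hpq
  rw [hcombo] at hcc
  have e3 : (w₃ - w₂) / (w₃ - w₁) * a + (w₂ - w₁) / (w₃ - w₁) * a = a := by
    rw [← add_mul, hpq, one_mul]
  rcases hstrict with h | h
  · nlinarith
  · nlinarith

end Aux5

open Aux Aux2 Aux3 Aux4 Aux5

/-- If a minimum `φ : ℝ² → ℝ` of finitely many affine functions
has a nonempty disconnected level set `φ⁻¹({a})`, then this level set is a union of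
two distinct parallel lines, `φ` is bounded above, and `φ` attains its supremum at
every point of some line parallel to these two lines. -/
theorem disconnected_level_set_of_min_affine
    (φ : Eu 2 → ℝ) (hφ : IsMinOfAffine φ) (a : ℝ)
    (hne : (φ ⁻¹' {a}).Nonempty) (hconn : ¬ IsConnected (φ ⁻¹' {a})) :
    ∃ v : Eu 2, v ≠ 0 ∧ ∃ p₁ p₂ p₃ : Eu 2,
      φ ⁻¹' {a} = {x | ∃ t : ℝ, x = p₁ + t • v} ∪ {x | ∃ t : ℝ, x = p₂ + t • v} ∧
      {x : Eu 2 | ∃ t : ℝ, x = p₁ + t • v} ≠ {x : Eu 2 | ∃ t : ℝ, x = p₂ + t • v} ∧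
      (∃ M : ℝ, ∀ x, φ x ≤ M) ∧
      (∀ x ∈ {x : Eu 2 | ∃ t : ℝ, x = p₃ + t • v}, ∀ y, φ y ≤ φ x) := by
  classical
  have hφ' : ∃ (k : ℕ) (A : Fin (k + 1) → (Eu 2 →ᵃ[ℝ] ℝ)), ∀ x, φ x = ⨅ i, A i x := hφ
  obtain ⟨k, A, hA⟩ := hφ'
  have hφeq : ∀ x, φ x = Phi A x := hA
  have hL : φ ⁻¹' {a} = {x : Eu 2 | Phi A x = a} := by
    ext x
    simp only [Set.mem_preimage, Set.mem_singleton_iff, Set.mem_setOf_eq, hφeq x]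
  rw [hL] at hne hconn
  -- Step 1 : there is a point strictly above level a
  have hO : ∃ x₀, a < Phi A x₀ := by
    by_contra h
    push_neg at h
    apply hconn
    have heq : {x : Eu 2 | Phi A x = a} = {x : Eu 2 | a ≤ Phi A x} := by
      ext x
      exact ⟨fun he => he.ge, fun hge => le_antisymm (h x) hge⟩
    refine ⟨hne, ?_⟩
    rw [heq]
    refine Convex.isPreconnected ?_
    intro x hx y hy p q hp hq hpq
    simp only [Set.mem_setOf_eq] at *
    have hcc := phi_concave A hp hq hpq (x := x) (y := y)
    have e1 : p * a ≤ p * Phi A x := mul_le_mul_of_nonneg_left hx hp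
    have e2 : q * a ≤ q * Phi A y := mul_le_mul_of_nonneg_left hy hq
    have e3 : p * a + q * a = a := by rw [← add_mul, hpq, one_mul]
    linarith
  obtain ⟨x₀, hx₀⟩ := hO
  -- Step 2 : all linear parts share a common kernel vector
  have hv : ∃ v : Eu 2, v ≠ 0 ∧ ∀ i, (A i).linear v = 0 := by
    by_contra h
    push_neg at h
    exact hconn ⟨hne, level_preconnected A a x₀ hx₀ (sublevel_preconnected A a x₀ hx₀ h)⟩
  obtain ⟨v, hv0, hlin⟩ := hv
  have hfac : ∀ x, Phi A x = gg A v (uu v x) := phi_factor A v hv0 hlin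
  have uu_combo : ∀ (p q : ℝ) (x y : Eu 2),
      uu v (p • x + q • y) = p * uu v x + q * uu v y := by
    intro p q x y
    have h0 : (p • x + q • y) 0 = p * x 0 + q * y 0 := rfl
    have h1 : (p • x + q • y) 1 = p * x 1 + q * y 1 := rfl
    show -(v 1) * (p • x + q • y) 0 + v 0 * (p • x + q • y) 1 =
      p * (-(v 1) * x 0 + v 0 * x 1) + q * (-(v 1) * y 0 + v 0 * y 1)
    rw [h0, h1]; ring
  -- Step 3 : the level set of the profile g is not convex
  have hTnc : ¬ Convex ℝ {t : ℝ | gg A v t = a} := by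
    intro hT
    apply hconn
    refine ⟨hne, Convex.isPreconnected ?_⟩
    intro x hx y hy p q hp hq hpq
    simp only [Set.mem_setOf_eq] at *
    rw [hfac x] at hx
    rw [hfac y] at hy
    have := hT hx hy hp hq hpq
    simp only [smul_eq_mul, Set.mem_setOf_eq] at this
    rw [hfac, uu_combo]
    exact this
  rw [convex_iff_forall_pos] at hTnc
  push_neg at hTnc
  obtain ⟨α₀, hα₀, β₀, hβ₀, p, q, hp, hq, hpq, hγ₀⟩ := hTnc
  simp only [Set.mem_setOf_eq, smul_eq_mul] at hα₀ hβ₀ hγ₀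
  have hαβne : α₀ ≠ β₀ := by
    rintro rfl
    apply hγ₀
    rw [show p * α₀ + q * α₀ = α₀ by rw [← add_mul, hpq, one_mul]]
    exact hα₀
  obtain ⟨α, β, γ, hαγ, hγβ, hαT, hβT, hγT⟩ :
      ∃ α β γ : ℝ, α < γ ∧ γ < β ∧ gg A v α = a ∧ gg A v β = a ∧ gg A v γ ≠ a := by
    rcases lt_or_gt_of_ne hαβne with h | h
    · refine ⟨α₀, β₀, p * α₀ + q * β₀, ?_, ?_, hα₀, hβ₀, hγ₀⟩
      · have hqb := mul_pos hq (sub_pos.2 h)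
        have he : p * α₀ + q * β₀ = α₀ + q * (β₀ - α₀) := by linear_combination α₀ * hpq
        linarith
      · have hpb := mul_pos hp (sub_pos.2 h)
        have he : p * α₀ + q * β₀ = β₀ - p * (β₀ - α₀) := by linear_combination β₀ * hpq
        linarith
    · refine ⟨β₀, α₀, p * α₀ + q * β₀, ?_, ?_, hβ₀, hα₀, hγ₀⟩
      · have hpb := mul_pos hp (sub_pos.2 h)
        have he : p * α₀ + q * β₀ = β₀ + p * (α₀ - β₀) := by linear_combination β₀ * hpq
        linarith
      · have hqb := mul_pos hq (sub_pos.2 h)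
        have he : p * α₀ + q * β₀ = α₀ - q * (α₀ - β₀) := by linear_combination α₀ * hpq
        linarith
  have hαβ : α < β := hαγ.trans hγβ
  have hγgt : a < gg A v γ :=
    lt_of_le_of_ne (gg_mid_ge A a v hαγ hγβ hαT.ge hβT.ge) (Ne.symm hγT)
  -- Step 4 : the level set of g is exactly {α, β}
  have hT2 : ∀ δ : ℝ, gg A v δ = a → δ = α ∨ δ = β := by
    intro δ hδ
    rcases lt_trichotomy δ γ with h | h | h
    · left
      by_contra hne'
      rcases lt_or_gt_of_ne hne' with h' | h'
      · have := gg_mid_gt A a v h' hαγ hδ.ge hγgt.le (Or.inr hγgt)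
        rw [hαT] at this
        exact lt_irrefl a this
      · have := gg_mid_gt A a v h' h hαT.ge hγgt.le (Or.inr hγgt)
        rw [hδ] at this
        exact lt_irrefl a this
    · rw [h] at hδ
      exact absurd hδ hγT
    · right
      by_contra hne'
      rcases lt_or_gt_of_ne hne' with h' | h'
      · have := gg_mid_gt A a v h h' hγgt.le hβT.ge (Or.inl hγgt)
        rw [hδ] at this
        exact lt_irrefl a this
      · have := gg_mid_gt A a v hγβ h' hγgt.le hδ.ge (Or.inl hγgt)
        rw [hβT] at this
        exact lt_irrefl a this
  have houtlo : ∀ w, w < α → gg A v w < a := fun w hw =>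
    gg_beyond' A a v hαγ hw hαT.le hγgt
  have houthi : ∀ w, β < w → gg A v w < a := fun w hw =>
    gg_beyond A a v hγβ hw hβT.le hγgt
  -- Step 5 : maximum of g on [α, β]
  obtain ⟨s', hs'mem, hs'max⟩ :=
    IsCompact.exists_isMaxOn (isCompact_Icc (a := α) (b := β))
      (Set.nonempty_Icc.2 hαβ.le) ((gg_cont A (v := v)).continuousOn)
  have hbound : ∀ x, Phi A x ≤ gg A v s' := by
    intro x
    rw [hfac x]
    set t := uu v x
    have hαmem : α ∈ Set.Icc α β := ⟨le_refl α, hαβ.le⟩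
    rcases lt_or_ge t α with h | h
    · have h1 : gg A v t < a := houtlo t h
      have h2 : a ≤ gg A v s' := hαT ▸ hs'max hαmem
      linarith
    · rcases le_or_gt t β with h' | h'
      · exact hs'max ⟨h, h'⟩
      · have h1 : gg A v t < a := houthi t h'
        have h2 : a ≤ gg A v s' := hαT ▸ hs'max hαmem
        linarith
  -- lines
  have line_eq : ∀ c : ℝ, {x : Eu 2 | ∃ t : ℝ, x = pt v c + t • v} = {x : Eu 2 | uu v x = c} := by
    intro c
    ext x
    constructor
    · rintro ⟨t, rfl⟩
      show uu v (pt v c + t • v) = c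
      rw [uu_add_smul, uu_pt v hv0]
    · intro hx
      have hx' : uu v x = uu v (pt v c) := by rw [uu_pt v hv0]; exact hx
      obtain ⟨s, hs⟩ := uu_fiber v hv0 hx'
      exact ⟨s, hs⟩
  refine ⟨v, hv0, pt v α, pt v β, pt v s', ?_, ?_, ⟨gg A v s', fun x => by
      rw [hφeq x]; exact hbound x⟩, ?_⟩
  · rw [hL, line_eq α, line_eq β]
    ext x
    simp only [Set.mem_setOf_eq, Set.mem_union]
    constructor
    · intro hx
      rw [hfac x] at hx
      exact hT2 _ hx
    · intro hx
      rw [hfac x]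
      rcases hx with h | h
      · rw [h]; exact hαT
      · rw [h]; exact hβT
  · intro hset
    have hmem : pt v α ∈ {x : Eu 2 | ∃ t : ℝ, x = pt v α + t • v} := ⟨0, by simp⟩
    rw [hset, line_eq β] at hmem
    have : uu v (pt v α) = β := hmem
    rw [uu_pt v hv0] at this
    exact hαβ.ne this
  · rintro x ⟨t, rfl⟩ y
    rw [hφeq, hφeq]
    have hx : Phi A (pt v s' + t • v) = gg A v s' := by
      rw [hfac, uu_add_smul, uu_pt v hv0]
    rw [hx]
    exact hbound y
end
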